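/- Let F₁ := (id⊗S_C)(E) ∈ B⊗B, viewed in A⊗A. Then F₁·(1⊗x) = (x⊗1)·F₁ for all x ∈ B (so the map a⊗b ↦ (a⊗1)F₁(1⊗b) satisfies (ax⊗1)F₁(1⊗b) = (a⊗1)F₁(1⊗xb) and descends to the balanced quotient A⊗_sA := (A⊗A)/J_s), and for all a, b ∈ A the element (a⊗1)F₁(1⊗b) − a⊗b lies in J_s := span_ℂ{a'x⊗b' − a'⊗xb' : x ∈ B, a', b' ∈ A}. -/
import Mathlib


open scoped TensorProduct

set_option synthInstance.maxHeartbeats 1000000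
set_option maxHeartbeats 1000000

/-- The canonical inclusion `B ⊗ C → A ⊗ A` for subalgebras `B, C ⊆ A`. -/
noncomputable def incl {A : Type*} [Ring A] [Algebra ℂ A] (B C : Subalgebra ℂ A) :
    (↥B ⊗[ℂ] ↥C) →ₗ[ℂ] (A ⊗[ℂ] A) :=
  TensorProduct.map B.val.toLinearMap C.val.toLinearMap

/-- The linear map `μ_{S_B} : B ⊗ C → C`, `b ⊗ c ↦ S_B(b)·c`. -/
noncomputable def muSB {A : Type*} [Ring A] [Algebra ℂ A] {B C : Subalgebra ℂ A}
    (SB : ↥B ≃ₗ[ℂ] ↥C) : (↥B ⊗[ℂ] ↥C) →ₗ[ℂ] ↥C :=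
  TensorProduct.lift (LinearMap.mul ℂ ↥C) ∘ₗ TensorProduct.map SB.toLinearMap LinearMap.id

/-- The linear map `μ_{S_C} : B ⊗ C → B`, `b ⊗ c ↦ b·S_C(c)`. -/
noncomputable def muSC {A : Type*} [Ring A] [Algebra ℂ A] {B C : Subalgebra ℂ A}
    (SC : ↥C ≃ₗ[ℂ] ↥B) : (↥B ⊗[ℂ] ↥C) →ₗ[ℂ] ↥B :=
  TensorProduct.lift (LinearMap.mul ℂ ↥B) ∘ₗ TensorProduct.map LinearMap.id SC.toLinearMap

/-- `F₁ := (id⊗S_C)(E) ∈ B⊗B` viewed in `A⊗A`. -/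
noncomputable def F1 {A : Type*} [Ring A] [Algebra ℂ A] {B C : Subalgebra ℂ A}
    (SC : ↥C ≃ₗ[ℂ] ↥B) (E : ↥B ⊗[ℂ] ↥C) : A ⊗[ℂ] A :=
  incl B B (TensorProduct.map LinearMap.id SC.toLinearMap E)

lemma F1_tmul {A : Type*} [Ring A] [Algebra ℂ A] {B C : Subalgebra ℂ A}
    (SC : ↥C ≃ₗ[ℂ] ↥B) (b : ↥B) (c : ↥C) :
    F1 SC (b ⊗ₜ[ℂ] c) = (b : A) ⊗ₜ[ℂ] ((SC c : ↥B) : A) := by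
  simp [F1, incl]

lemma F1_add {A : Type*} [Ring A] [Algebra ℂ A] {B C : Subalgebra ℂ A}
    (SC : ↥C ≃ₗ[ℂ] ↥B) (t₁ t₂ : ↥B ⊗[ℂ] ↥C) :
    F1 SC (t₁ + t₂) = F1 SC t₁ + F1 SC t₂ := by
  simp [F1]

lemma muSC_tmul {A : Type*} [Ring A] [Algebra ℂ A] {B C : Subalgebra ℂ A}
    (SC : ↥C ≃ₗ[ℂ] ↥B) (b : ↥B) (c : ↥C) :
    muSC SC (b ⊗ₜ[ℂ] c) = b * SC c := by
  simp [muSC]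

lemma F1_left_mul {A : Type*} [Ring A] [Algebra ℂ A] {B C : Subalgebra ℂ A}
    (SC : ↥C ≃ₗ[ℂ] ↥B) (hSCmul : ∀ y y' : ↥C, SC (y * y') = SC y' * SC y)
    (y : ↥C) (t : ↥B ⊗[ℂ] ↥C) :
    F1 SC (((1 : ↥B) ⊗ₜ[ℂ] y) * t) = F1 SC t * ((1 : A) ⊗ₜ[ℂ] ((SC y : ↥B) : A)) := by
  induction t using TensorProduct.induction_on with
  | zero => simp [F1]
  | tmul b c =>
      rw [Algebra.TensorProduct.tmul_mul_tmul, one_mul, F1_tmul, F1_tmul,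
        Algebra.TensorProduct.tmul_mul_tmul, mul_one, hSCmul]
      push_cast
      ring_nf
  | add t₁ t₂ h₁ h₂ =>
      rw [mul_add, F1_add, F1_add, h₁, h₂, add_mul]

lemma F1_left_mul' {A : Type*} [Ring A] [Algebra ℂ A] {B C : Subalgebra ℂ A}
    (SC : ↥C ≃ₗ[ℂ] ↥B) (x : ↥B) (t : ↥B ⊗[ℂ] ↥C) :
    F1 SC ((x ⊗ₜ[ℂ] (1 : ↥C)) * t) = ((x : A) ⊗ₜ[ℂ] (1 : A)) * F1 SC t := by
  induction t using TensorProduct.induction_on with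
  | zero => simp [F1]
  | tmul b c =>
      rw [Algebra.TensorProduct.tmul_mul_tmul, one_mul, F1_tmul, F1_tmul,
        Algebra.TensorProduct.tmul_mul_tmul, one_mul]
      push_cast
      ring_nf
  | add t₁ t₂ h₁ h₂ =>
      rw [mul_add, F1_add, F1_add, h₁, h₂, mul_add]

lemma F1_span {A : Type*} [Ring A] [Algebra ℂ A] {B C : Subalgebra ℂ A}
    (SC : ↥C ≃ₗ[ℂ] ↥B) (a b : A) (t : ↥B ⊗[ℂ] ↥C) :
    (a ⊗ₜ[ℂ] (1 : A)) * F1 SC t * ((1 : A) ⊗ₜ[ℂ] b)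
      - a ⊗ₜ[ℂ] (((muSC SC t : ↥B) : A) * b) ∈
        Submodule.span ℂ {z : A ⊗[ℂ] A |
          ∃ (x : ↥B) (a' b' : A),
            z = (a' * (x : A)) ⊗ₜ[ℂ] b' - a' ⊗ₜ[ℂ] ((x : A) * b')} := by
  induction t using TensorProduct.induction_on with
  | zero => simp [F1]
  | tmul e f =>
      rw [F1_tmul, muSC_tmul, Algebra.TensorProduct.tmul_mul_tmul,
        Algebra.TensorProduct.tmul_mul_tmul, mul_one, one_mul]
      apply Submodule.subset_span
      refine ⟨e, a, ((SC f : ↥B) : A) * b, ?_⟩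
      push_cast
      rw [mul_assoc]
  | add t₁ t₂ h₁ h₂ =>
      have := Submodule.add_mem _ h₁ h₂
      convert this using 1
      rw [F1_add, map_add]
      push_cast
      rw [add_mul, mul_add, add_mul, TensorProduct.tmul_add]
      abel

/-- `F₁·(1⊗x) = (x⊗1)·F₁` for all `x ∈ B`, and for all `a, b ∈ A` the element
`(a⊗1)F₁(1⊗b) − a⊗b` lies in the balancing subspace `J_s`. -/
theorem stmt12 {A : Type*} [Ring A] [Algebra ℂ A] (B C : Subalgebra ℂ A)
    (hcomm : ∀ (x : ↥B) (y : ↥C), (x : A) * (y : A) = (y : A) * (x : A))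
    (SB : ↥B ≃ₗ[ℂ] ↥C) (hSBmul : ∀ x x' : ↥B, SB (x * x') = SB x' * SB x)
    (hSBone : SB 1 = 1)
    (SC : ↥C ≃ₗ[ℂ] ↥B) (hSCmul : ∀ y y' : ↥C, SC (y * y') = SC y' * SC y)
    (hSCone : SC 1 = 1)
    (E : ↥B ⊗[ℂ] ↥C) (hEidem : E * E = E)
    (hE1 : ∀ x : ↥B, E * (x ⊗ₜ[ℂ] (1 : ↥C)) = E * ((1 : ↥B) ⊗ₜ[ℂ] SB x))
    (hE2 : ∀ y : ↥C, ((1 : ↥B) ⊗ₜ[ℂ] y) * E = (SC y ⊗ₜ[ℂ] (1 : ↥C)) * E)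
    (hn1 : muSB SB E = 1) (hn2 : muSC SC E = 1) :
    (∀ x : ↥B,
      F1 SC E * ((1 : A) ⊗ₜ[ℂ] (x : A)) = ((x : A) ⊗ₜ[ℂ] (1 : A)) * F1 SC E) ∧
    (∀ a b : A,
      (a ⊗ₜ[ℂ] (1 : A)) * F1 SC E * ((1 : A) ⊗ₜ[ℂ] b) - a ⊗ₜ[ℂ] b ∈
        Submodule.span ℂ {z : A ⊗[ℂ] A |
          ∃ (x : ↥B) (a' b' : A),
            z = (a' * (x : A)) ⊗ₜ[ℂ] b' - a' ⊗ₜ[ℂ] ((x : A) * b')}) := by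
  constructor
  · intro x
    have h := congrArg (F1 SC) (hE2 (SC.symm x))
    rw [F1_left_mul SC hSCmul, F1_left_mul' SC, SC.apply_symm_apply] at h
    exact h
  · intro a b
    have h := F1_span SC a b E
    rw [hn2] at h
    simpa using h
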